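/- (Jeffrey via frequentist learning) For a channel c : X → D(Y), distribution ω on X, and a multiset ψ of size K over Y such that the update is defined, pushing the updated multinomial forward along frequentist learning gives Jeffrey's update: flrn ≫ (Multinomial[K](ω)|_{M[K](c)≪1_ψ}) = c†_ω ≫ flrn(ψ). -/
import Mathlib

open Finset

noncomputable def validity {X : Type*} [Fintype X] (ω p : X → ℝ) : ℝ := ∑ x, ω x * p x
noncomputable def updateD {X : Type*} [Fintype X] (ω p : X → ℝ) : X → ℝ :=
  fun x => ω x * p x / validity ω p
noncomputable def push {X Y : Type*} [Fintype X] (c : X → Y → ℝ) (ω : X → ℝ) : Y → ℝ :=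
  fun y => ∑ x, ω x * c x y
noncomputable def pull {X Y : Type*} [Fintype Y] (c : X → Y → ℝ) (q : Y → ℝ) : X → ℝ :=
  fun x => ∑ y, c x y * q y
noncomputable def dagger {X Y : Type*} [Fintype X] (c : X → Y → ℝ) (ω : X → ℝ) : Y → X → ℝ :=
  fun y x => ω x * c x y / push c ω y

def IsDist {X : Type*} [Fintype X] (ω : X → ℝ) : Prop :=
  (∀ x, 0 ≤ ω x) ∧ ∑ x, ω x = 1
def IsChannel {X Y : Type*} [Fintype Y] (c : X → Y → ℝ) : Prop :=
  ∀ x, IsDist (c x)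
def IsPred {X : Type*} (p : X → ℝ) : Prop := ∀ x, 0 ≤ p x ∧ p x ≤ 1

noncomputable def coefm {X : Type*} [Fintype X] [DecidableEq X] (K : ℕ) (φ : Sym X K) : ℝ :=
  (K.factorial : ℝ) / ∏ x, (((φ : Multiset X).count x).factorial : ℝ)
noncomputable def multinom {X : Type*} [Fintype X] [DecidableEq X] (K : ℕ) (ω : X → ℝ)
    (φ : Sym X K) : ℝ :=
  coefm K φ * ∏ x, ω x ^ ((φ : Multiset X).count x)
noncomputable def flrn {X : Type*} [DecidableEq X] (K : ℕ) (φ : Sym X K) : X → ℝ :=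
  fun x => ((φ : Multiset X).count x : ℝ) / K
def acc {X : Type*} {K : ℕ} (v : Fin K → X) : Sym X K :=
  ⟨Multiset.map v Finset.univ.val, by simp⟩
noncomputable def arr {X : Type*} [Fintype X] [DecidableEq X] {K : ℕ} (φ : Sym X K) :
    (Fin K → X) → ℝ :=
  fun v => if acc v = φ then 1 / coefm K φ else 0
noncomputable def Mchan {X Y : Type*} [Fintype X] [DecidableEq X] [Fintype Y] [DecidableEq Y]
    {K : ℕ} (c : X → Y → ℝ) : Sym X K → Sym Y K → ℝ :=
  fun φ ψ => ∑ v : Fin K → X, arr φ v *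
    ∑ w : Fin K → Y, (∏ i, c (v i) (w i)) * (if acc w = ψ then 1 else 0)
open Classical in
noncomputable def klE {Z : Type*} [Fintype Z] (ω ρ : Z → ℝ) : EReal :=
  if ∀ z, ω z ≠ 0 → ρ z ≠ 0 then ((∑ z, ω z * Real.log (ω z / ρ z) : ℝ) : EReal) else ⊤
section helpers
variable {X : Type*} [Fintype X] [DecidableEq X] {K : ℕ}

set_option linter.unusedSectionVars false

lemma count_acc_nat (v : Fin K → X) (x : X) :
    (acc v : Multiset X).count x = ∑ i, if v i = x then 1 else 0 := by
  show (Multiset.map v Finset.univ.val).count x = _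
  rw [Multiset.count_map]
  have : Multiset.filter (fun a => x = v a) univ.val
      = (univ.filter fun a => x = v a).val := rfl
  rw [this, ← Finset.card_def, Finset.card_filter]
  simp [eq_comm]

lemma count_acc (v : Fin K → X) (x : X) :
    ((acc v : Multiset X).count x : ℝ) = ∑ i, if v i = x then (1:ℝ) else 0 := by
  rw [count_acc_nat]; push_cast; simp

lemma prod_count_acc (f : X → ℝ) (v : Fin K → X) :
    ∏ x, f x ^ ((acc v : Multiset X).count x) = ∏ i, f (v i) := by
  have h1 : ∏ i, f (v i) = (Multiset.map f (acc v : Multiset X)).prod := by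
    show _ = (Multiset.map f (Multiset.map v Finset.univ.val)).prod
    rw [Multiset.map_map]; rfl
  rw [h1, Finset.prod_multiset_map_count]
  refine (Finset.prod_subset (Finset.subset_univ _) ?_).symm
  intro x _ hx
  rw [Multiset.count_eq_zero_of_notMem (by simpa using hx), pow_zero]

lemma coefm_pos (φ : Sym X K) : 0 < coefm K φ := by
  apply div_pos
  · exact_mod_cast Nat.factorial_pos K
  · exact Finset.prod_pos fun x _ => by exact_mod_cast Nat.factorial_pos _

lemma multinom_mul_arr (ω : X → ℝ) (φ : Sym X K) (v : Fin K → X) :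
    multinom K ω φ * arr φ v = if acc v = φ then ∏ i, ω (v i) else 0 := by
  unfold multinom arr
  split_ifs with h
  · subst h
    rw [prod_count_acc]
    rw [mul_comm, ← mul_assoc, one_div, inv_mul_cancel₀ (coefm_pos _).ne', one_mul]
  · ring

lemma sum_count_acc {Y : Type*} [Fintype Y] [DecidableEq Y] (w : Fin K → Y) (g : Y → ℝ) :
    ∑ i, g (w i) = ∑ y, ((acc w : Multiset Y).count y : ℝ) * g y := by
  have h : ∀ y, ((acc w : Multiset Y).count y : ℝ) * g y
      = ∑ i, if w i = y then g y else 0 := by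
    intro y
    rw [count_acc, Finset.sum_mul]
    exact Finset.sum_congr rfl fun i _ => by split_ifs <;> simp
  simp_rw [h]
  rw [Finset.sum_comm]
  exact Finset.sum_congr rfl fun i _ => by simp

lemma sum_prod_eq_prod_sum (f : Fin K → X → ℝ) :
    ∑ v : Fin K → X, ∏ i, f i (v i) = ∏ i, ∑ a, f i a := by
  rw [Finset.prod_univ_sum, Fintype.piFinset_univ]

lemma sum_prod_ite (f : Fin K → X → ℝ) (i : Fin K) (x : X) :
    ∑ v : Fin K → X, (∏ j, f j (v j)) * (if v i = x then (1:ℝ) else 0)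
    = f i x * ∏ j ∈ univ.erase i, ∑ a, f j a := by
  set g : Fin K → X → ℝ := fun j a => if j = i then (if a = x then f j a else 0) else f j a
    with hg
  have key : ∀ v : Fin K → X, (∏ j, f j (v j)) * (if v i = x then (1:ℝ) else 0)
      = ∏ j, g j (v j) := by
    intro v
    by_cases h : v i = x
    · rw [if_pos h, mul_one]
      refine Finset.prod_congr rfl fun j _ => ?_
      simp only [hg]
      split_ifs with h1 h2
      · rfl
      · exact absurd (h1 ▸ h) h2
      · rfl
    · rw [if_neg h, mul_zero]
      refine (Finset.prod_eq_zero (Finset.mem_univ i) ?_).symm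
      simp [hg, h]
  simp_rw [key]
  rw [sum_prod_eq_prod_sum]
  rw [← Finset.mul_prod_erase univ _ (Finset.mem_univ i)]
  congr 1
  · simp [hg]
  · refine Finset.prod_congr rfl fun j hj => ?_
    refine Finset.sum_congr rfl fun a _ => ?_
    simp [hg, (Finset.mem_erase.mp hj).1]

lemma collapse' (ω : X → ℝ) (T : (Fin K → X) → ℝ) (h : Sym X K → ℝ) :
    ∑ φ : Sym X K, multinom K ω φ * (∑ v : Fin K → X, arr φ v * T v) * h φ
    = ∑ v : Fin K → X, (∏ i, ω (v i)) * T v * h (acc v) := by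
  have step : ∀ φ, multinom K ω φ * (∑ v : Fin K → X, arr φ v * T v) * h φ
      = ∑ v : Fin K → X, (if acc v = φ then (∏ i, ω (v i)) * T v * h φ else 0) := by
    intro φ
    rw [Finset.mul_sum, Finset.sum_mul]
    refine Finset.sum_congr rfl fun v _ => ?_
    have hm := multinom_mul_arr ω φ v
    calc multinom K ω φ * (arr φ v * T v) * h φ
        = (multinom K ω φ * arr φ v) * (T v * h φ) := by ring
      _ = (if acc v = φ then ∏ i, ω (v i) else 0) * (T v * h φ) := by rw [hm]
      _ = _ := by split_ifs <;> ring
  simp_rw [step]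
  rw [Finset.sum_comm]
  refine Finset.sum_congr rfl fun v _ => ?_
  simp

end helpers


theorem stmt18 {X Y : Type*} [Fintype X] [DecidableEq X] [Fintype Y] [DecidableEq Y]
    (K : ℕ) (hK : 1 ≤ K) (c : X → Y → ℝ) (hc : IsChannel c) (ω : X → ℝ) (hω : IsDist ω)
    (ψ : Sym Y K)
    (hnorm : validity (multinom K ω) (fun φ : Sym X K => Mchan c φ ψ) ≠ 0)
    (hpush : ∀ y, 0 < (ψ : Multiset Y).count y → push c ω y ≠ 0) :
    ∀ x : X,
      ∑ φ : Sym X K,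
        updateD (multinom K ω) (fun φ : Sym X K => Mchan c φ ψ) φ
          * (((φ : Multiset X).count x : ℝ) / K)
      = ∑ y, (((ψ : Multiset Y).count y : ℝ) / K) * dagger c ω y x := by
  intro x
  set D := validity (multinom K ω) (fun φ : Sym X K => Mchan c φ ψ) with hD
  set R := ∑ y, (((ψ : Multiset Y).count y : ℝ) / K) * dagger c ω y x with hR
  set T : (Fin K → X) → ℝ := fun v =>
    ∑ w : Fin K → Y, (∏ i, c (v i) (w i)) * (if acc w = ψ then (1:ℝ) else 0) with hT
  have hMchan : ∀ φ : Sym X K, Mchan c φ ψ = ∑ v : Fin K → X, arr φ v * T v := fun φ => rfl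
  have hps : ∀ y : Y, (∑ a, ω a * c a y) = push c ω y := fun _ => rfl
  -- evaluation of the inner sum for w with acc w = ψ
  have hinner : ∀ w : Fin K → Y, acc w = ψ →
      (∑ v : Fin K → X, (∏ i, ω (v i) * c (v i) (w i))
          * (((acc v : Multiset X).count x : ℝ) / K))
      = (∏ j, push c ω (w j)) * R := by
    intro w hw
    have hwne : ∀ i, push c ω (w i) ≠ 0 := by
      intro i
      apply hpush
      rw [Multiset.count_pos, ← hw]
      exact Multiset.mem_map_of_mem w (Finset.mem_val.mpr (Finset.mem_univ i))
    have step1 : ∀ v : Fin K → X,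
        (∏ j, ω (v j) * c (v j) (w j)) * (((acc v : Multiset X).count x : ℝ) / K)
        = ∑ i, ((∏ j, ω (v j) * c (v j) (w j)) * (if v i = x then (1:ℝ) else 0)) / K := by
      intro v
      rw [count_acc, Finset.sum_div, Finset.mul_sum]
      exact Finset.sum_congr rfl fun i _ => (mul_div_assoc _ _ _).symm
    simp_rw [step1]
    rw [Finset.sum_comm]
    have step2 : ∀ i : Fin K,
        (∑ v : Fin K → X, ((∏ j, ω (v j) * c (v j) (w j))
            * (if v i = x then (1:ℝ) else 0)) / K)
        = ((∏ j, push c ω (w j)) * dagger c ω (w i) x) / K := by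
      intro i
      rw [← Finset.sum_div]
      congr 1
      rw [sum_prod_ite (fun j a => ω a * c a (w j)) i x]
      simp_rw [hps]
      rw [← Finset.mul_prod_erase univ (fun j => push c ω (w j)) (Finset.mem_univ i)]
      rw [show dagger c ω (w i) x = ω x * c x (w i) / push c ω (w i) from rfl]
      have := hwne i
      field_simp
    simp_rw [step2]
    rw [hR]
    simp_rw [mul_div_assoc]
    rw [← Finset.mul_sum]
    congr 1
    rw [sum_count_acc w (fun y => dagger c ω y x / K), hw]
    exact Finset.sum_congr rfl fun y _ => by ring
  -- numerator equals D * R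
  have hN : (∑ φ : Sym X K, multinom K ω φ * Mchan c φ ψ
        * (((φ : Multiset X).count x : ℝ) / K)) = D * R := by
    simp_rw [hMchan]
    rw [collapse' ω T (fun φ => ((φ : Multiset X).count x : ℝ) / K)]
    have expand : ∀ v : Fin K → X,
        (∏ i, ω (v i)) * T v * (((acc v : Multiset X).count x : ℝ) / K)
        = ∑ w : Fin K → Y, (if acc w = ψ then (1:ℝ) else 0) *
            ((∏ i, ω (v i) * c (v i) (w i)) * (((acc v : Multiset X).count x : ℝ) / K)) := by
      intro v
      rw [hT]
      simp only
      rw [Finset.mul_sum, Finset.sum_mul]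
      refine Finset.sum_congr rfl fun w _ => ?_
      rw [Finset.prod_mul_distrib]
      ring
    simp_rw [expand]
    rw [Finset.sum_comm]
    have step : ∀ w : Fin K → Y,
        (∑ v : Fin K → X, (if acc w = ψ then (1:ℝ) else 0) *
            ((∏ i, ω (v i) * c (v i) (w i)) * (((acc v : Multiset X).count x : ℝ) / K)))
        = (if acc w = ψ then (1:ℝ) else 0) * ((∏ j, push c ω (w j)) * R) := by
      intro w
      rw [← Finset.mul_sum]
      by_cases hwψ : acc w = ψ
      · rw [if_pos hwψ, one_mul, one_mul, hinner w hwψ]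
      · rw [if_neg hwψ, zero_mul, zero_mul]
    simp_rw [step]
    have hDval : D = ∑ w : Fin K → Y,
        (if acc w = ψ then (1:ℝ) else 0) * ∏ j, push c ω (w j) := by
      rw [hD]
      unfold validity
      have h1 : ∀ φ : Sym X K, multinom K ω φ * Mchan c φ ψ
          = multinom K ω φ * (∑ v : Fin K → X, arr φ v * T v) * 1 := fun φ => by
        rw [hMchan]; ring
      simp_rw [h1]
      rw [collapse' ω T (fun _ => 1)]
      simp_rw [mul_one]
      have expand1 : ∀ v : Fin K → X, (∏ i, ω (v i)) * T v
          = ∑ w : Fin K → Y, (if acc w = ψ then (1:ℝ) else 0)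
              * (∏ i, ω (v i) * c (v i) (w i)) := by
        intro v
        rw [hT]
        simp only
        rw [Finset.mul_sum]
        refine Finset.sum_congr rfl fun w _ => ?_
        rw [Finset.prod_mul_distrib]
        ring
      simp_rw [expand1]
      rw [Finset.sum_comm]
      refine Finset.sum_congr rfl fun w _ => ?_
      rw [← Finset.mul_sum]
      congr 1
      rw [sum_prod_eq_prod_sum (fun i a => ω a * c a (w i))]
      simp_rw [hps]
    rw [hDval, Finset.sum_mul]
    exact Finset.sum_congr rfl fun w _ => by ring
  have hLHS : (∑ φ : Sym X K,
        updateD (multinom K ω) (fun φ : Sym X K => Mchan c φ ψ) φ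
          * (((φ : Multiset X).count x : ℝ) / K))
      = (∑ φ : Sym X K, multinom K ω φ * Mchan c φ ψ
          * (((φ : Multiset X).count x : ℝ) / K)) / D := by
    rw [Finset.sum_div]
    refine Finset.sum_congr rfl fun φ _ => ?_
    simp only [updateD]
    rw [← hD, div_mul_eq_mul_div]
  rw [hLHS, hN, mul_comm, mul_div_assoc, div_self hnorm, mul_one]
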